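/- Let Z ∈ ℝ^{n×L}, X ∈ ℝ^{n×d} with full column rank, P = X(X^T X)^{-1}X^T, and P^⊥ = I − P. For τ₁, τ₂ > 0 and α ∈ [0,1], the minimization of ‖Z − Xβ − B‖_F² + τ₁‖β‖_F² + τ₂(α‖B‖_* + (1−α)‖B‖_F²) over β ∈ ℝ^{d×L} and B ∈ ℝ^{n×L} with X^T B = 0 separates: the objective equals ‖PZ − Xβ‖_F² + τ₁‖β‖_F² + ‖P^⊥Z − B‖_F² + τ₂(α‖B‖_* + (1−α)‖B‖_F²), so β̂ and B̂ can be obtained by two independent minimizations. -/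

import Mathlib

open Matrix

/-- Squared Frobenius norm of a matrix. -/
noncomputable def frobSq {n L : ℕ} (M : Matrix (Fin n) (Fin L) ℝ) : ℝ :=
  ∑ i, ∑ j, (M i j) ^ 2

/-- Nuclear norm: sum of singular values, i.e. of square roots of the
eigenvalues of BᵀB. -/
noncomputable def nuclearNorm {n L : ℕ} (B : Matrix (Fin n) (Fin L) ℝ) : ℝ :=
  ∑ j, Real.sqrt ((Matrix.isHermitian_conjTranspose_mul_self B).eigenvalues j)

lemma frobSq_add_of_orth {n L : ℕ} (A C : Matrix (Fin n) (Fin L) ℝ)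
    (h : Aᵀ * C = 0) : frobSq (A + C) = frobSq A + frobSq C := by
  have hc : ∑ i, ∑ j, A i j * C i j = 0 := by
    have h2 := congrArg Matrix.trace h
    rw [Matrix.trace, Matrix.trace_zero] at h2
    simp only [Matrix.diag, Matrix.mul_apply, Matrix.transpose_apply] at h2
    rw [Finset.sum_comm] at h2
    exact h2
  simp only [frobSq, Matrix.add_apply]
  calc ∑ i, ∑ j, (A i j + C i j) ^ 2
      = ∑ i, ∑ j, (A i j ^ 2 + C i j ^ 2 + 2 * (A i j * C i j)) :=
        Finset.sum_congr rfl fun i _ => Finset.sum_congr rfl fun j _ => by ring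
    _ = (∑ i, ∑ j, A i j ^ 2) + (∑ i, ∑ j, C i j ^ 2)
          + 2 * ∑ i, ∑ j, A i j * C i j := by
        simp [Finset.sum_add_distrib, Finset.mul_sum]
    _ = (∑ i, ∑ j, A i j ^ 2) + (∑ i, ∑ j, C i j ^ 2) := by rw [hc]; ring

/-- The penalized objective separates: for XᵀB = 0,
‖Z − Xβ − B‖_F² + τ₁‖β‖_F² + τ₂(α‖B‖_* + (1−α)‖B‖_F²)
  = ‖PZ − Xβ‖_F² + τ₁‖β‖_F² + ‖P⊥Z − B‖_F² + τ₂(α‖B‖_* + (1−α)‖B‖_F²),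
so the two parameters can be estimated by independent minimizations. -/
theorem penalized_objective_separates
    (n d L : ℕ) (X : Matrix (Fin n) (Fin d) ℝ) (hX : Invertible (Xᵀ * X))
    (Z : Matrix (Fin n) (Fin L) ℝ)
    (P : Matrix (Fin n) (Fin n) ℝ) (hP : P = X * (Xᵀ * X)⁻¹ * Xᵀ)
    (τ₁ τ₂ α : ℝ) (hτ₁ : 0 < τ₁) (hτ₂ : 0 < τ₂) (hα : 0 ≤ α ∧ α ≤ 1) :
    ∀ (β : Matrix (Fin d) (Fin L) ℝ) (B : Matrix (Fin n) (Fin L) ℝ),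
      Xᵀ * B = 0 →
      frobSq (Z - X * β - B) + τ₁ * frobSq β +
          τ₂ * (α * nuclearNorm B + (1 - α) * frobSq B) =
        frobSq (P * Z - X * β) + τ₁ * frobSq β +
          (frobSq ((1 - P) * Z - B) +
            τ₂ * (α * nuclearNorm B + (1 - α) * frobSq B)) := by
  intro β B hB
  have hu : IsUnit (Xᵀ * X).det :=
    (Matrix.isUnit_iff_isUnit_det _).mp (isUnit_of_invertible _)
  have hinv : (Xᵀ * X)⁻¹ * (Xᵀ * X) = 1 := Matrix.nonsing_inv_mul _ hu
  have hinv' : (Xᵀ * X) * (Xᵀ * X)⁻¹ = 1 := Matrix.mul_nonsing_inv _ hu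
  have hXtP : Xᵀ * P = Xᵀ := by
    rw [hP]
    calc Xᵀ * (X * (Xᵀ * X)⁻¹ * Xᵀ) = (Xᵀ * X) * (Xᵀ * X)⁻¹ * Xᵀ := by
          simp only [Matrix.mul_assoc]
      _ = Xᵀ := by rw [hinv', Matrix.one_mul]
  have hPt : Pᵀ = P := by
    rw [hP]
    simp only [Matrix.transpose_mul, Matrix.transpose_transpose,
      Matrix.transpose_nonsing_inv]
    rw [Matrix.mul_assoc]
  have hPB : P * B = 0 := by
    rw [hP, Matrix.mul_assoc, hB, Matrix.mul_zero]
  have hPP : P * P = P := by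
    rw [hP]
    calc X * (Xᵀ * X)⁻¹ * Xᵀ * (X * (Xᵀ * X)⁻¹ * Xᵀ)
        = X * (Xᵀ * X)⁻¹ * ((Xᵀ * X) * (Xᵀ * X)⁻¹) * Xᵀ := by simp only [Matrix.mul_assoc]
      _ = X * (Xᵀ * X)⁻¹ * Xᵀ := by rw [hinv', Matrix.mul_one]
  have horth : (P * Z - X * β)ᵀ * ((1 - P) * Z - B) = 0 := by
    simp only [Matrix.transpose_sub, Matrix.transpose_mul, hPt]
    rw [Matrix.sub_mul, Matrix.mul_sub, Matrix.mul_sub]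
    have e1 : Zᵀ * P * ((1 - P) * Z) = 0 := by
      rw [Matrix.sub_mul, Matrix.one_mul, Matrix.mul_sub, ← Matrix.mul_assoc,
        Matrix.mul_assoc Zᵀ P P, hPP]
      simp
    have e2 : Zᵀ * P * B = 0 := by rw [Matrix.mul_assoc, hPB, Matrix.mul_zero]
    have e3 : βᵀ * Xᵀ * ((1 - P) * Z) = 0 := by
      rw [Matrix.sub_mul, Matrix.one_mul, Matrix.mul_sub, ← Matrix.mul_assoc,
        Matrix.mul_assoc βᵀ Xᵀ P, hXtP]
      simp
    have e4 : βᵀ * Xᵀ * B = 0 := by rw [Matrix.mul_assoc, hB, Matrix.mul_zero]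
    rw [e1, e2, e3, e4]
    simp
  have hsplit : Z - X * β - B = (P * Z - X * β) + ((1 - P) * Z - B) := by
    rw [Matrix.sub_mul, Matrix.one_mul]
    abel
  rw [hsplit, frobSq_add_of_orth _ _ horth]
  ring
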